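/- arXiv:1205.2163 — 3 statements merged into one kernel-verified Lean document; each statement's English description precedes it below -/
import Mathlib

section
/- Let A be a bialgebra over a commutative ring k and let e ∈ A be a grouplike element (Δ(e)=e⊗e, ε(e)=1) such that e·a = e·a·e for all a ∈ A (note this forces e·e = e, so left multiplication by e is an idempotent k-linear projection and eA = {e·a : a ∈ A} is a direct summand of A). Then: eA is closed under the multiplication of A; e is a two-sided unit for eA; Δ maps eA into the canonical (split) image of eA⊗eA in A⊗A; and eA, endowed with the restricted multiplication, unit e, the corestricted comultiplication eA → eA⊗eA (characterized by Δ(ea) = ea₁⊗ea₂) and the restricted counit, is a bialgebra over k. -/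
open TensorProduct LinearMap

section WDL

variable (R : Type*) [CommRing R]

section AlgDefs

variable {A B : Type*} [Ring A] [Ring B] [Algebra R A] [Algebra R B]

/-- Weak distributive law axioms, stated pointwise on pure tensors. -/
def IsWeakDistLaw (ψ : A ⊗[R] B →ₗ[R] B ⊗[R] A) : Prop :=
  (∀ (a a' : A) (b : B), ψ ((a * a') ⊗ₜ[R] b) =
      lTensor B (mul' R A) ((TensorProduct.assoc R B A A)
        (rTensor A ψ ((TensorProduct.assoc R A B A).symm (a ⊗ₜ[R] ψ (a' ⊗ₜ[R] b)))))) ∧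
  (∀ (a : A) (b b' : B), ψ (a ⊗ₜ[R] (b * b')) =
      rTensor A (mul' R B) ((TensorProduct.assoc R B B A).symm
        (lTensor B ψ ((TensorProduct.assoc R B A B) (ψ (a ⊗ₜ[R] b) ⊗ₜ[R] b'))))) ∧
  (∀ b : B, ψ ((1 : A) ⊗ₜ[R] b) =
      rTensor A (mul' R B) ((TensorProduct.assoc R B B A).symm
        (b ⊗ₜ[R] ψ ((1 : A) ⊗ₜ[R] (1 : B))))) ∧
  (∀ a : A, ψ (a ⊗ₜ[R] (1 : B)) =
      lTensor B (mul' R A) ((TensorProduct.assoc R B A A)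
        (ψ ((1 : A) ⊗ₜ[R] (1 : B)) ⊗ₜ[R] a)))

/-- (Strict) distributive law axioms, stated pointwise on pure tensors. -/
def IsDistLaw (ψ : A ⊗[R] B →ₗ[R] B ⊗[R] A) : Prop :=
  (∀ (a a' : A) (b : B), ψ ((a * a') ⊗ₜ[R] b) =
      lTensor B (mul' R A) ((TensorProduct.assoc R B A A)
        (rTensor A ψ ((TensorProduct.assoc R A B A).symm (a ⊗ₜ[R] ψ (a' ⊗ₜ[R] b)))))) ∧
  (∀ (a : A) (b b' : B), ψ (a ⊗ₜ[R] (b * b')) =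
      rTensor A (mul' R B) ((TensorProduct.assoc R B B A).symm
        (lTensor B ψ ((TensorProduct.assoc R B A B) (ψ (a ⊗ₜ[R] b) ⊗ₜ[R] b'))))) ∧
  (∀ b : B, ψ ((1 : A) ⊗ₜ[R] b) = b ⊗ₜ[R] (1 : A)) ∧
  (∀ a : A, ψ (a ⊗ₜ[R] (1 : B)) = (1 : B) ⊗ₜ[R] a)

/-- `φ` is a weak inverse of `ψ`. -/
def IsWeakInverse (ψ : A ⊗[R] B →ₗ[R] B ⊗[R] A) (φ : B ⊗[R] A →ₗ[R] A ⊗[R] B) : Prop :=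
  (∀ (a : A) (b : B), ψ (φ (b ⊗ₜ[R] a)) =
      rTensor A (mul' R B) ((TensorProduct.assoc R B B A).symm
        (b ⊗ₜ[R] ψ (a ⊗ₜ[R] (1 : B))))) ∧
  (∀ (a : A) (b : B), φ (ψ (a ⊗ₜ[R] b)) =
      rTensor B (mul' R A) ((TensorProduct.assoc R A A B).symm
        (a ⊗ₜ[R] φ (b ⊗ₜ[R] (1 : A)))))

/-- The weak wreath product multiplication `(μ_B ⊗ μ_A) ∘ (id_B ⊗ ψ ⊗ id_A)`. -/
noncomputable def wreathMul (ψ : A ⊗[R] B →ₗ[R] B ⊗[R] A) :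
    (B ⊗[R] A) ⊗[R] (B ⊗[R] A) →ₗ[R] B ⊗[R] A :=
  TensorProduct.map (mul' R B) (mul' R A)
    ∘ₗ (TensorProduct.assoc R B B (A ⊗[R] A)).symm.toLinearMap
    ∘ₗ lTensor B (TensorProduct.assoc R B A A).toLinearMap
    ∘ₗ lTensor B (rTensor A ψ)
    ∘ₗ lTensor B (TensorProduct.assoc R A B A).symm.toLinearMap
    ∘ₗ (TensorProduct.assoc R B A (B ⊗[R] A)).toLinearMap

end AlgDefs

section CoalgDefs

variable {A B : Type*} [AddCommGroup A] [AddCommGroup B] [Module R A] [Module R B]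

/-- Tensor product comultiplication `(id ⊗ tw ⊗ id) ∘ (dA ⊗ dB)` built from the
comultiplication data `dA`, `dB`. -/
noncomputable def comulD (dA : A →ₗ[R] A ⊗[R] A) (dB : B →ₗ[R] B ⊗[R] B) :
    A ⊗[R] B →ₗ[R] (A ⊗[R] B) ⊗[R] (A ⊗[R] B) :=
  (TensorProduct.tensorTensorTensorComm R A A B B).toLinearMap ∘ₗ TensorProduct.map dA dB

/-- Tensor product counit `ε_A ⊗ ε_B`. -/
noncomputable def counitD (eA : A →ₗ[R] R) (eB : B →ₗ[R] R) : A ⊗[R] B →ₗ[R] R :=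
  (TensorProduct.lid R R).toLinearMap ∘ₗ TensorProduct.map eA eB

/-- The weakly comonoidal conditions for a mutually weak inverse pair `(ψ, φ)`,
with respect to comultiplication/counit data on `A` and `B`. -/
def IsWeaklyComonoidalD (ψ : A ⊗[R] B →ₗ[R] B ⊗[R] A) (φ : B ⊗[R] A →ₗ[R] A ⊗[R] B)
    (dA : A →ₗ[R] A ⊗[R] A) (dB : B →ₗ[R] B ⊗[R] B)
    (eA : A →ₗ[R] R) (eB : B →ₗ[R] R) : Prop :=
  (rTensor (B ⊗[R] A) (ψ ∘ₗ φ) ∘ₗ comulD R dB dA ∘ₗ ψ =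
      TensorProduct.map ψ ψ ∘ₗ comulD R dA dB) ∧
  (lTensor (B ⊗[R] A) (ψ ∘ₗ φ) ∘ₗ comulD R dB dA ∘ₗ ψ =
      TensorProduct.map ψ ψ ∘ₗ comulD R dA dB) ∧
  (rTensor (A ⊗[R] B) (φ ∘ₗ ψ) ∘ₗ comulD R dA dB ∘ₗ φ =
      TensorProduct.map φ φ ∘ₗ comulD R dB dA) ∧
  (lTensor (A ⊗[R] B) (φ ∘ₗ ψ) ∘ₗ comulD R dA dB ∘ₗ φ =
      TensorProduct.map φ φ ∘ₗ comulD R dB dA) ∧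
  (counitD R eB eA ∘ₗ ψ = counitD R eA eB ∘ₗ φ ∘ₗ ψ)

end CoalgDefs

section ComonClass

variable {A B : Type*} [AddCommGroup A] [AddCommGroup B] [Module R A] [Module R B]
  [Coalgebra R A] [Coalgebra R B]

/-- Tensor product comultiplication on `A ⊗ B` for coalgebras `A`, `B`. -/
noncomputable def comulTP : A ⊗[R] B →ₗ[R] (A ⊗[R] B) ⊗[R] (A ⊗[R] B) :=
  comulD R (Coalgebra.comul (R := R) (A := A)) (Coalgebra.comul (R := R) (A := B))

/-- Tensor product counit on `A ⊗ B` for coalgebras `A`, `B`. -/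
noncomputable def counitTP : A ⊗[R] B →ₗ[R] R :=
  counitD R (Coalgebra.counit (R := R) (A := A)) (Coalgebra.counit (R := R) (A := B))

end ComonClass

/-- Weakly comonoidal pair with respect to given coalgebra instances. -/
def IsWeaklyComonoidal {A B : Type*} [Ring A] [Ring B] [Algebra R A] [Algebra R B]
    [Coalgebra R A] [Coalgebra R B]
    (ψ : A ⊗[R] B →ₗ[R] B ⊗[R] A) (φ : B ⊗[R] A →ₗ[R] A ⊗[R] B) : Prop :=
  IsWeaklyComonoidalD R ψ φ (Coalgebra.comul (R := R) (A := A))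
    (Coalgebra.comul (R := R) (A := B)) (Coalgebra.counit (R := R) (A := A))
    (Coalgebra.counit (R := R) (A := B))

end WDL

/-- Data of a (possibly weak) bialgebra structure on a module `M`. -/
structure WBAData (R M : Type*) [CommRing R] [AddCommGroup M] [Module R M] where
  mul : M ⊗[R] M →ₗ[R] M
  one : M
  comul : M →ₗ[R] M ⊗[R] M
  counit : M →ₗ[R] R

namespace WBAData

variable {R M : Type*} [CommRing R] [AddCommGroup M] [Module R M] (d : WBAData R M)

/-- The induced multiplication of `M ⊗ M`. -/
noncomputable def mul2 : (M ⊗[R] M) ⊗[R] (M ⊗[R] M) →ₗ[R] M ⊗[R] M :=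
  TensorProduct.map d.mul d.mul ∘ₗ (TensorProduct.tensorTensorTensorComm R M M M M).toLinearMap

/-- The induced multiplication of `(M ⊗ M) ⊗ M`. -/
noncomputable def mul3 :
    ((M ⊗[R] M) ⊗[R] M) ⊗[R] ((M ⊗[R] M) ⊗[R] M) →ₗ[R] (M ⊗[R] M) ⊗[R] M :=
  TensorProduct.map d.mul2 d.mul ∘ₗ
    (TensorProduct.tensorTensorTensorComm R (M ⊗[R] M) M (M ⊗[R] M) M).toLinearMap

/-- Left multiplication by `a`. -/
noncomputable def lmul (a : M) : M →ₗ[R] M := d.mul ∘ₗ TensorProduct.mk R M M a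

/-- Right multiplication by `c`. -/
noncomputable def rmul (c : M) : M →ₗ[R] M := d.mul ∘ₗ (TensorProduct.mk R M M).flip c

/-- Convolution product of endomorphisms. -/
noncomputable def conv (f g : M →ₗ[R] M) : M →ₗ[R] M :=
  d.mul ∘ₗ TensorProduct.map f g ∘ₗ d.comul

/-- The projection `⊓^L : a ↦ ε(1₁a)1₂`. -/
noncomputable def piL : M →ₗ[R] M :=
  (TensorProduct.lid R M).toLinearMap
    ∘ₗ rTensor M (d.counit ∘ₗ d.mul ∘ₗ (TensorProduct.comm R M M).toLinearMap)
    ∘ₗ (TensorProduct.assoc R M M M).symm.toLinearMap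
    ∘ₗ (TensorProduct.mk R M (M ⊗[R] M)).flip (d.comul d.one)

/-- The projection `⊓^R : a ↦ 1₁ε(a1₂)`. -/
noncomputable def piR : M →ₗ[R] M :=
  (TensorProduct.rid R M).toLinearMap
    ∘ₗ lTensor M (d.counit ∘ₗ d.mul ∘ₗ (TensorProduct.comm R M M).toLinearMap)
    ∘ₗ (TensorProduct.assoc R M M M).toLinearMap
    ∘ₗ TensorProduct.mk R (M ⊗[R] M) M (d.comul d.one)

/-- The axioms of a weak bialgebra on the data `d`. -/
structure IsWeakBialgebra : Prop where
  mul_assoc : d.mul ∘ₗ rTensor M d.mul =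
      d.mul ∘ₗ lTensor M d.mul ∘ₗ (TensorProduct.assoc R M M M).toLinearMap
  one_mul : ∀ x : M, d.mul (d.one ⊗ₜ[R] x) = x
  mul_one : ∀ x : M, d.mul (x ⊗ₜ[R] d.one) = x
  coassoc : (TensorProduct.assoc R M M M).toLinearMap ∘ₗ rTensor M d.comul ∘ₗ d.comul
      = lTensor M d.comul ∘ₗ d.comul
  counit_left : ∀ x : M, (TensorProduct.lid R M) (rTensor M d.counit (d.comul x)) = x
  counit_right : ∀ x : M, (TensorProduct.rid R M) (lTensor M d.counit (d.comul x)) = x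
  comul_mul : d.comul ∘ₗ d.mul = d.mul2 ∘ₗ TensorProduct.map d.comul d.comul
  delta_one_left : d.mul3 ((d.comul d.one ⊗ₜ[R] d.one) ⊗ₜ[R]
      ((TensorProduct.assoc R M M M).symm (d.one ⊗ₜ[R] d.comul d.one)))
      = rTensor M d.comul (d.comul d.one)
  delta_one_right : d.mul3 (((TensorProduct.assoc R M M M).symm
      (d.one ⊗ₜ[R] d.comul d.one)) ⊗ₜ[R] (d.comul d.one ⊗ₜ[R] d.one))
      = rTensor M d.comul (d.comul d.one)
  counit_mul_left : ∀ a b c : M, (TensorProduct.lid R R) (TensorProduct.map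
      (d.counit ∘ₗ d.lmul a) (d.counit ∘ₗ d.rmul c) (d.comul b))
      = d.counit (d.mul (d.mul (a ⊗ₜ[R] b) ⊗ₜ[R] c))
  counit_mul_right : ∀ a b c : M, (TensorProduct.lid R R) (TensorProduct.map
      (d.counit ∘ₗ d.rmul c) (d.counit ∘ₗ d.lmul a) (d.comul b))
      = d.counit (d.mul (d.mul (a ⊗ₜ[R] b) ⊗ₜ[R] c))

/-- The axioms of a (genuine) bialgebra on the data `d`. -/
structure IsBialgebra : Prop where
  mul_assoc : d.mul ∘ₗ rTensor M d.mul =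
      d.mul ∘ₗ lTensor M d.mul ∘ₗ (TensorProduct.assoc R M M M).toLinearMap
  one_mul : ∀ x : M, d.mul (d.one ⊗ₜ[R] x) = x
  mul_one : ∀ x : M, d.mul (x ⊗ₜ[R] d.one) = x
  coassoc : (TensorProduct.assoc R M M M).toLinearMap ∘ₗ rTensor M d.comul ∘ₗ d.comul
      = lTensor M d.comul ∘ₗ d.comul
  counit_left : ∀ x : M, (TensorProduct.lid R M) (rTensor M d.counit (d.comul x)) = x
  counit_right : ∀ x : M, (TensorProduct.rid R M) (lTensor M d.counit (d.comul x)) = x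
  comul_mul : d.comul ∘ₗ d.mul = d.mul2 ∘ₗ TensorProduct.map d.comul d.comul
  comul_one : d.comul d.one = d.one ⊗ₜ[R] d.one
  counit_one : d.counit d.one = 1
  counit_mul : ∀ x y : M, d.counit (d.mul (x ⊗ₜ[R] y)) = d.counit x * d.counit y

/-- `S` is an antipode for the data `d`. -/
def IsAntipode (S : M →ₗ[R] M) : Prop :=
  d.conv LinearMap.id S = d.piL ∧ d.conv S LinearMap.id = d.piR ∧
    d.conv (d.conv S LinearMap.id) S = S

end WBAData

/-- The canonical weak-bialgebra data attached to an algebra-and-coalgebra `H`. -/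
noncomputable def algWBA (R H : Type*) [CommRing R] [Ring H] [Algebra R H] [Coalgebra R H] :
    WBAData R H :=
  { mul := LinearMap.mul' R H
    one := 1
    comul := Coalgebra.comul
    counit := Coalgebra.counit }

/-! Left multiplication by `e` is idempotent, so it retracts `A` onto `eA`; hence `eA ⊗ eA` and
`eA ⊗ eA ⊗ eA` embed into the corresponding tensor powers of `A`, and every bialgebra axiom of
`eA` can be checked after embedding into `A`. The comultiplication restricts to `eA` because
`Δ(ea) = Δ(e)Δ(a) = (e ⊗ e)Δ(a)`, and `e` is a unit of `eA` because `e² = e` and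
`eae = ea`. -/

theorem TensorProduct.map_injective_of_leftInverse {R M N P Q : Type*} [CommRing R]
    [AddCommGroup M] [AddCommGroup N] [AddCommGroup P] [AddCommGroup Q]
    [Module R M] [Module R N] [Module R P] [Module R Q]
    {f : M →ₗ[R] N} {g : N →ₗ[R] M} {f' : P →ₗ[R] Q} {g' : Q →ₗ[R] P}
    (h : g ∘ₗ f = LinearMap.id) (h' : g' ∘ₗ f' = LinearMap.id) :
    Function.Injective (map f f') :=
  Function.LeftInverse.injective (g := map g g') fun t => by
    rw [← LinearMap.comp_apply, ← map_comp, h, h', map_id, LinearMap.id_apply]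

namespace WBAData

variable {R M A : Type*} [CommRing R] [AddCommGroup M] [Module R M] [Ring A]
  {d : WBAData R M}

theorem map_mul2_tmul [Algebra R A] {ι : M →ₗ[R] A}
    (hmul : ∀ x y, ι (d.mul (x ⊗ₜ y)) = ι x * ι y)
    (u v : M ⊗[R] M) : map ι ι (d.mul2 (u ⊗ₜ v)) = map ι ι u * map ι ι v := by
  have : map ι ι ∘ₗ d.mul2 = mul' R (A ⊗[R] A) ∘ₗ map (map ι ι) (map ι ι) := by
    ext; simp [mul2, hmul]
  exact LinearMap.congr_fun this (u ⊗ₜ v)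

theorem isBialgebra_of_leftInverse [Bialgebra R A] {ι : M →ₗ[R] A} {r : A →ₗ[R] M}
    (hr : r ∘ₗ ι = LinearMap.id)
    (hmul : ∀ x y, ι (d.mul (x ⊗ₜ y)) = ι x * ι y)
    (hone_mul : ∀ x, ι d.one * ι x = ι x) (hmul_one : ∀ x, ι x * ι d.one = ι x)
    (hcomul_one : Coalgebra.comul (ι d.one) = ι d.one ⊗ₜ[R] ι d.one)
    (hcounit_one : Coalgebra.counit (ι d.one) = (1 : R))
    (hcomul : map ι ι ∘ₗ d.comul = Coalgebra.comul ∘ₗ ι)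
    (hcounit : d.counit = Coalgebra.counit ∘ₗ ι) :
    d.IsBialgebra := by
  have inj₁ : Function.Injective ι := Function.LeftInverse.injective (LinearMap.congr_fun hr)
  have inj₂ : Function.Injective (map ι ι) := TensorProduct.map_injective_of_leftInverse hr hr
  have inj₃ : Function.Injective (map ι (map ι ι)) :=
    TensorProduct.map_injective_of_leftInverse hr (by rw [← map_comp, hr, map_id])
  have hcomul_apply (x : M) : map ι ι (d.comul x) = Coalgebra.comul (ι x) :=
    LinearMap.congr_fun hcomul x
  refine ⟨?mul_assoc, fun x => inj₁ ?one_mul, fun x => inj₁ ?mul_one, ?coassoc,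
    fun x => inj₁ ?counit_left, fun x => inj₁ ?counit_right, ?comul_mul, inj₂ ?comul_one,
    ?counit_one, fun x y => ?counit_mul⟩
  case mul_assoc =>
    ext x y z
    exact inj₁ (by simp [hmul, mul_assoc])
  case one_mul => rw [hmul, hone_mul]
  case mul_one => rw [hmul, hmul_one]
  case coassoc =>
    ext x
    apply inj₃
    simp only [LinearMap.comp_apply, LinearEquiv.coe_coe, map_map_assoc, map_rTensor,
      map_lTensor, hcomul]
    rw [← rTensor_map, ← lTensor_map, hcomul_apply, Coalgebra.coassoc_apply]
  case counit_left =>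
    have hlid : ι ∘ₗ (TensorProduct.lid R M).toLinearMap =
        (TensorProduct.lid R A).toLinearMap ∘ₗ lTensor R ι := by
      ext; simp
    rw [← LinearEquiv.coe_coe, ← LinearMap.comp_apply ι, hlid, LinearMap.comp_apply,
      ← LinearMap.comp_apply (lTensor R ι), lTensor_comp_rTensor, hcounit, ← rTensor_map,
      hcomul_apply]
    simp
  case counit_right =>
    have hrid : ι ∘ₗ (TensorProduct.rid R M).toLinearMap =
        (TensorProduct.rid R A).toLinearMap ∘ₗ rTensor R ι := by
      ext; simp
    rw [← LinearEquiv.coe_coe, ← LinearMap.comp_apply ι, hrid, LinearMap.comp_apply,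
      ← LinearMap.comp_apply (rTensor R ι), rTensor_comp_lTensor, hcounit, ← lTensor_map,
      hcomul_apply]
    simp
  case comul_mul =>
    ext x y
    apply inj₂
    simp [map_mul2_tmul hmul, hcomul_apply, hmul]
  case comul_one => simp [hcomul_apply, hcomul_one]
  case counit_one => simp [hcounit, hcounit_one]
  case counit_mul => simp [hcounit, hmul]

end WBAData

section Corner

variable {R A : Type*} [CommRing R] [Ring A]

theorem LinearMap.mul_mem_range_mulLeft [Algebra R A] {e x : A}
    (hx : x ∈ range (mulLeft R e)) (y : A) : x * y ∈ range (mulLeft R e) := by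
  obtain ⟨a, rfl⟩ := hx
  exact ⟨a * y, by simp [mul_assoc]⟩

theorem IsIdempotentElem.mul_of_mem_range_mulLeft [Algebra R A] {e x : A}
    (he : IsIdempotentElem e) (hx : x ∈ range (mulLeft R e)) : e * x = x := by
  obtain ⟨a, rfl⟩ := hx
  simp [← mul_assoc, he.eq]

theorem IsIdempotentElem.rangeRestrict_comp_subtype_mulLeft [Algebra R A] {e : A}
    (he : IsIdempotentElem e) :
    (mulLeft R e).rangeRestrict ∘ₗ (range (mulLeft R e)).subtype = LinearMap.id :=
  LinearMap.ext fun x => Subtype.ext (he.mul_of_mem_range_mulLeft x.2)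

variable (R) in
noncomputable def cornerData [Algebra R A] [Coalgebra R A] (e : A) :
    WBAData R (range (mulLeft R e)) where
  mul := (mulLeft R e).rangeRestrict ∘ₗ mul' R A ∘ₗ
    map (range (mulLeft R e)).subtype (range (mulLeft R e)).subtype
  one := (mulLeft R e).rangeRestrict 1
  comul := map (mulLeft R e).rangeRestrict (mulLeft R e).rangeRestrict ∘ₗ Coalgebra.comul ∘ₗ
    (range (mulLeft R e)).subtype
  counit := Coalgebra.counit ∘ₗ (range (mulLeft R e)).subtype

theorem coe_cornerData_one [Algebra R A] [Coalgebra R A] (e : A) :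
    ((cornerData R e).one : A) = e := by
  simp [cornerData]

theorem coe_cornerData_mul [Algebra R A] [Coalgebra R A] {e : A} (he : IsIdempotentElem e)
    (x y : range (mulLeft R e)) : ((cornerData R e).mul (x ⊗ₜ y) : A) = x * y := by
  simpa [cornerData] using he.mul_of_mem_range_mulLeft (mul_mem_range_mulLeft x.2 y)

theorem map_subtype_cornerData_comul [Bialgebra R A] {e : A} (he : IsIdempotentElem e)
    (hΔ : Coalgebra.comul (R := R) e = e ⊗ₜ e) (x : range (mulLeft R e)) :
    map (range (mulLeft R e)).subtype (range (mulLeft R e)).subtype ((cornerData R e).comul x) =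
      Coalgebra.comul (x : A) := by
  calc _ = mulLeft R (e ⊗ₜ[R] e) (Coalgebra.comul (x : A)) := by
        rw [mulLeft_tmul, cornerData, LinearMap.comp_apply, LinearMap.comp_apply,
          ← LinearMap.comp_apply (map _ _), ← map_comp, subtype_comp_codRestrict,
          Submodule.subtype_apply]
    _ = Coalgebra.comul (x : A) := by
        rw [mulLeft_apply, ← hΔ, ← Bialgebra.comul_mul, he.mul_of_mem_range_mulLeft x.2]

end Corner

/-- for a grouplike `e` with `ea = eae`, the direct summand `eA` is a
bialgebra with unit `e` and the (co)restricted structure maps. -/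
theorem grouplike_corner_bialgebra
    {R A : Type*} [CommRing R] [Ring A] [Bialgebra R A]
    (e : A) (he1 : Coalgebra.comul (R := R) e = e ⊗ₜ[R] e)
    (he2 : Coalgebra.counit (R := R) e = (1 : R))
    (he3 : ∀ a : A, e * a = e * a * e) :
    let P : Submodule R A := LinearMap.range (LinearMap.mulLeft R e)
    -- `eA` is closed under multiplication
    (∀ x ∈ P, ∀ y ∈ P, x * y ∈ P) ∧
    -- `e` is a two-sided unit for `eA`
    (∀ x ∈ P, e * x = x ∧ x * e = x) ∧
    -- `Δ` maps `eA` into the canonical image of `eA ⊗ eA` in `A ⊗ A`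
    (∀ x ∈ P, Coalgebra.comul (R := R) x ∈
      LinearMap.range (TensorProduct.map P.subtype P.subtype)) ∧
    -- `eA` is a bialgebra with the (co)restricted structure maps
    (∃ d : WBAData R ↥P,
      (∀ x y : ↥P, ((d.mul (x ⊗ₜ[R] y) : ↥P) : A) = (x : A) * (y : A)) ∧
      (((d.one : ↥P) : A) = e) ∧
      (∀ x : ↥P, TensorProduct.map P.subtype P.subtype (d.comul x) =
        Coalgebra.comul (R := R) (x : A)) ∧
      (∀ x : ↥P, d.counit x = Coalgebra.counit (R := R) (x : A)) ∧
      d.IsBialgebra) := by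
  intro P
  have he : IsIdempotentElem e := by simpa [IsIdempotentElem] using (he3 1).symm
  have mul_e (x : P) : (x : A) * e = x := by
    obtain ⟨a, ha⟩ := x.2
    rw [← ha, mulLeft_apply, ← he3]
  have hcomul := map_subtype_cornerData_comul he he1
  refine ⟨fun x hx y _ => mul_mem_range_mulLeft hx y,
    fun x hx => ⟨he.mul_of_mem_range_mulLeft hx, mul_e ⟨x, hx⟩⟩,
    fun x hx => ⟨_, hcomul ⟨x, hx⟩⟩, cornerData R e, coe_cornerData_mul he,
    coe_cornerData_one e, hcomul, fun _ => rfl, ?_⟩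
  refine WBAData.isBialgebra_of_leftInverse he.rangeRestrict_comp_subtype_mulLeft
    (coe_cornerData_mul he) (fun x => ?_) (fun x => ?_) ?_ ?_ (LinearMap.ext hcomul) rfl <;>
    simp only [Submodule.subtype_apply, coe_cornerData_one]
  · exact he.mul_of_mem_range_mulLeft x.2
  · exact mul_e x
  · exact he1
  · exact he2
end

section
/- Let k be a commutative ring, G a finite group, and A a k-algebra measured by kG with a twisted 2-cocycle: that is, for each g∈G an algebra homomorphism φ_g : A → A and for each pair g,h∈G an invertible element c_{g,h} ∈ A such that φ_1 = id_A, c_{1,g} = 1 = c_{g,1}, φ_g∘φ_h = Ad_{c_{g,h}}∘φ_{gh} (where Ad_u(x) = u·x·u⁻¹), and φ_g(c_{h,l})·c_{g,hl} = c_{g,h}·c_{gh,l} for all g,h,l∈G. Let M be the k-algebra of G×G matrices over k with matrix units e_{g,h}. Then the k-linear map ψ : M⊗A → A⊗M determined by ψ(e_{g,h}⊗a) = c_{g⁻¹h,h⁻¹}⁻¹·φ_{g⁻¹h}(a)·c_{g⁻¹h,h⁻¹} ⊗ e_{g,h} is a bijective distributive law between M and A. -/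
/-!
Write `θ g h = Ad (c (g⁻¹ * h) h⁻¹)⁻¹ ∘ φ (g⁻¹ * h)`, so that `ψ (e g h ⊗ a) = θ g h a ⊗ e g h`.
The twisted action and the cocycle identity make `θ` a functor on the pair groupoid of `G`:
`θ g g = id` and `θ g h ∘ θ h k = θ g k`. For any such family of algebra maps indexed by a finite
set, `e i j ⊗ a ↦ θ i j a ⊗ e i j` is a distributive law: by additivity the two multiplicativity
conditions reduce to products of matrix units, and `e i j * e k l` vanishes unless `j = k`, when
transitivity applies. Its inverse is `a ⊗ e i j ↦ e i j ⊗ θ j i a`.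
-/

open TensorProduct LinearMap

/-- The `(g,h)` matrix entry, as a linear functional. -/
def entryLM (R G : Type*) [CommRing R] (g h : G) : Matrix G G R →ₗ[R] R where
  toFun m := m g h
  map_add' _ _ := rfl
  map_smul' _ _ := rfl

/-- The map `ψ(e_{g,h} ⊗ a) = c_{g⁻¹h,h⁻¹}⁻¹ · φ_{g⁻¹h}(a) · c_{g⁻¹h,h⁻¹} ⊗ e_{g,h}`
associated to a measuring with a twisted 2-cocycle. -/
noncomputable def cocyclePsi {R G A : Type*} [CommRing R] [Group G] [Fintype G]
    [DecidableEq G] [Ring A] [Algebra R A]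
    (φf : G → (A →ₐ[R] A)) (c : G → G → Aˣ) :
    Matrix G G R ⊗[R] A →ₗ[R] A ⊗[R] Matrix G G R :=
  ∑ g : G, ∑ h : G,
    ((TensorProduct.mk R A (Matrix G G R)).flip (Matrix.single g h 1)) ∘ₗ
      (TensorProduct.lid R A).toLinearMap ∘ₗ
      TensorProduct.map (entryLM R G g h)
        (LinearMap.mulRight R ((c (g⁻¹ * h) h⁻¹ : Aˣ) : A) ∘ₗ
          LinearMap.mulLeft R (((c (g⁻¹ * h) h⁻¹)⁻¹ : Aˣ) : A) ∘ₗ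
          (φf (g⁻¹ * h)).toLinearMap)

section MatrixDistLaw

variable {R I A : Type*} [CommSemiring R] [Fintype I] [DecidableEq I] [Semiring A] [Algebra R A]
  (θ : I → I → A →ₐ[R] A)

noncomputable def matrixDistLaw : Matrix I I R ⊗[R] A →ₗ[R] A ⊗[R] Matrix I I R :=
  TensorProduct.lift <| LinearMap.mk₂ R
    (fun m a => ∑ i, ∑ j, m i j • (θ i j a ⊗ₜ[R] Matrix.single i j (1 : R)))
    (fun m m' a => by simp only [Matrix.add_apply, add_smul, Finset.sum_add_distrib])
    (fun r m a => by simp only [Matrix.smul_apply, smul_eq_mul, mul_smul, Finset.smul_sum])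
    (fun m a a' => by simp only [map_add, add_tmul, smul_add, Finset.sum_add_distrib])
    (fun r m a => by simp only [map_smul, smul_tmul', smul_comm r, Finset.smul_sum])

theorem matrixDistLaw_single_tmul (i j : I) (r : R) (a : A) :
    matrixDistLaw θ (Matrix.single i j r ⊗ₜ a) = θ i j a ⊗ₜ Matrix.single i j r := by
  simp only [matrixDistLaw, lift.tmul, mk₂_apply, Matrix.single_apply, ite_and, ite_smul,
    zero_smul, Finset.sum_ite_irrel, Finset.sum_ite_eq, Finset.mem_univ, if_true,
    Finset.sum_const_zero]
  rw [← tmul_smul, Matrix.smul_single, smul_eq_mul, mul_one]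

noncomputable def matrixDistLawInv : A ⊗[R] Matrix I I R →ₗ[R] Matrix I I R ⊗[R] A :=
  (TensorProduct.comm R A (Matrix I I R)).toLinearMap ∘ₗ matrixDistLaw (fun i j => θ j i) ∘ₗ
    (TensorProduct.comm R A (Matrix I I R)).toLinearMap

theorem matrixDistLawInv_tmul_single (i j : I) (r : R) (a : A) :
    matrixDistLawInv θ (a ⊗ₜ Matrix.single i j r) = Matrix.single i j r ⊗ₜ θ j i a := by
  simp [matrixDistLawInv, matrixDistLaw_single_tmul]

variable {θ} (hinv : ∀ i j, (θ i j).comp (θ j i) = AlgHom.id R A)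
include hinv

theorem matrixDistLawInv_comp_matrixDistLaw :
    matrixDistLawInv θ ∘ₗ matrixDistLaw θ = LinearMap.id := by
  refine TensorProduct.ext' fun m a => ?_
  induction m using Matrix.induction_on' with
  | h_zero => simp
  | h_add p q hp hq => simp_all [add_tmul]
  | h_std_basis i j r =>
    simp [matrixDistLaw_single_tmul, matrixDistLawInv_tmul_single, ← AlgHom.comp_apply, hinv]

theorem matrixDistLaw_comp_matrixDistLawInv :
    matrixDistLaw θ ∘ₗ matrixDistLawInv θ = LinearMap.id := by
  refine TensorProduct.ext' fun a m => ?_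
  induction m using Matrix.induction_on' with
  | h_zero => simp
  | h_add p q hp hq => simp_all [tmul_add]
  | h_std_basis i j r =>
    simp [matrixDistLaw_single_tmul, matrixDistLawInv_tmul_single, ← AlgHom.comp_apply, hinv]

noncomputable def matrixDistLawEquiv : Matrix I I R ⊗[R] A ≃ₗ[R] A ⊗[R] Matrix I I R :=
  .ofLinearMap (matrixDistLaw θ) (matrixDistLawInv θ) (matrixDistLaw_comp_matrixDistLawInv hinv)
    (matrixDistLawInv_comp_matrixDistLaw hinv)

theorem matrixDistLaw_bijective : Function.Bijective (matrixDistLaw θ) :=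
  (matrixDistLawEquiv hinv).bijective

end MatrixDistLaw

theorem isDistLaw_matrixDistLaw {R I A : Type*} [CommRing R] [Fintype I] [DecidableEq I] [Ring A]
    [Algebra R A] {θ : I → I → A →ₐ[R] A} (hrefl : ∀ i, θ i i = AlgHom.id R A)
    (htrans : ∀ i j k, (θ i j).comp (θ j k) = θ i k) :
    IsDistLaw R (matrixDistLaw θ) := by
  refine ⟨fun m m' a => ?_, fun m a b => ?_, fun b => ?_, fun m => ?_⟩
  · induction m using Matrix.induction_on' with
    | h_zero => simp
    | h_add p q hp hq => simp_all [add_mul, add_tmul]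
    | h_std_basis i j r =>
      induction m' using Matrix.induction_on' with
      | h_zero => simp
      | h_add p q hp hq => simp_all [mul_add, add_tmul, tmul_add]
      | h_std_basis k l s =>
        by_cases hjk : j = k
        · subst hjk
          simp [matrixDistLaw_single_tmul, ← AlgHom.comp_apply, htrans]
        · simp [matrixDistLaw_single_tmul, hjk]
  · induction m using Matrix.induction_on' with
    | h_zero => simp
    | h_add p q hp hq => simp_all [add_tmul]
    | h_std_basis i j r => simp [matrixDistLaw_single_tmul]
  · have hone : (1 : Matrix I I R) = ∑ i, Matrix.single i i 1 := by
      ext i j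
      simp [Matrix.one_apply, Matrix.single_apply, Matrix.sum_apply, ite_and]
    simp [hone, sum_tmul, tmul_sum, matrixDistLaw_single_tmul, hrefl]
  · induction m using Matrix.induction_on' with
    | h_zero => simp
    | h_add p q hp hq => simp_all [add_tmul, tmul_add]
    | h_std_basis i j r => simp [matrixDistLaw_single_tmul]

theorem inv_mul_map_conj_mul_eq {M N : Type*} [Monoid M] [Monoid N] (f : M →* N) {y : M} {z : N}
    {v : Mˣ} {c u w : Nˣ} (hy : f y = c * z * ↑c⁻¹) (hc : f v * u = c * w) :
    ↑u⁻¹ * f (↑v⁻¹ * y * v) * u = ↑w⁻¹ * z * w := by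
  have hfv : Units.map f v = c * w * u⁻¹ := by
    rw [eq_mul_inv_iff_mul_eq]
    exact Units.ext hc
  rw [map_mul, map_mul, ← Units.coe_map f v, ← Units.coe_map_inv, hy, hfv]
  simp [mul_assoc]

section TwistedCocycle

variable {R G A : Type*} [CommSemiring R] [Group G] [Semiring A] [Algebra R A]
  (φf : G → (A →ₐ[R] A)) (c : G → G → Aˣ)

noncomputable def cocycleConj (g h : G) : A →ₐ[R] A :=
  (MulSemiringAction.toAlgHom R A (ConjAct.toConjAct (c (g⁻¹ * h) h⁻¹)⁻¹)).comp (φf (g⁻¹ * h))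

theorem cocycleConj_apply (g h : G) (a : A) :
    cocycleConj φf c g h a = ↑(c (g⁻¹ * h) h⁻¹)⁻¹ * φf (g⁻¹ * h) a * ↑(c (g⁻¹ * h) h⁻¹) := by
  simp [cocycleConj, ConjAct.units_smul_def]

variable {φf c}

theorem cocycleConj_self (h1 : φf 1 = AlgHom.id R A) (hc : ∀ g, c 1 g = 1) (g : G) :
    cocycleConj φf c g g = AlgHom.id R A := by
  ext a
  simp [cocycleConj_apply, h1, hc]

theorem cocycleConj_comp_cocycleConj
    (hφ : ∀ (g h : G) (x : A),
      φf g (φf h x) = (c g h : A) * φf (g * h) x * (((c g h)⁻¹ : Aˣ) : A))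
    (hcocycle : ∀ g h l : G,
      φf g ((c h l : A)) * (c g (h * l) : A) = (c g h : A) * (c (g * h) l : A))
    (g h k : G) :
    (cocycleConj φf c g h).comp (cocycleConj φf c h k) = cocycleConj φf c g k := by
  ext a
  have hmul : g⁻¹ * h * (h⁻¹ * k) = g⁻¹ * k := by group
  have hc := hcocycle (g⁻¹ * h) (h⁻¹ * k) k⁻¹
  rw [hmul, mul_inv_cancel_right] at hc
  simp only [AlgHom.comp_apply, cocycleConj_apply]
  exact inv_mul_map_conj_mul_eq (φf (g⁻¹ * h) : A →* A) (hmul ▸ hφ _ _ a) hc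

end TwistedCocycle

theorem cocyclePsi_eq_matrixDistLaw {R G A : Type*} [CommRing R] [Group G] [Fintype G]
    [DecidableEq G] [Ring A] [Algebra R A] (φf : G → (A →ₐ[R] A)) (c : G → G → Aˣ) :
    cocyclePsi φf c = matrixDistLaw (cocycleConj φf c) := by
  refine TensorProduct.ext' fun m a => ?_
  simp only [cocyclePsi, coe_sum, coe_comp, LinearEquiv.coe_coe, Finset.sum_apply,
    Function.comp_apply, map_tmul, AlgHom.coe_toLinearMap, mulLeft_apply, mulRight_apply, lid_tmul,
    map_smul, flip_apply, mk_apply, smul_tmul', matrixDistLaw, cocycleConj_apply, lift.tmul,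
    mk₂_apply]
  rfl

/-- for an algebra measured by `kG` with a twisted 2-cocycle, the map
`ψ` is a bijective distributive law between the matrix algebra and `A`. -/
theorem cocycle_dist_law
    {R G A : Type*} [CommRing R] [Group G] [Fintype G] [DecidableEq G]
    [Ring A] [Algebra R A]
    (φf : G → (A →ₐ[R] A)) (c : G → G → Aˣ)
    (h1 : φf 1 = AlgHom.id R A)
    (h2 : ∀ g : G, c 1 g = 1 ∧ c g 1 = 1)
    (h3 : ∀ (g h : G) (x : A),
      φf g (φf h x) = (c g h : A) * φf (g * h) x * (((c g h)⁻¹ : Aˣ) : A))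
    (h4 : ∀ g h l : G,
      φf g ((c h l : A)) * (c g (h * l) : A) = (c g h : A) * (c (g * h) l : A)) :
    -- `ψ` is determined by the stated formula on the matrix units
    (∀ (g h : G) (a : A),
      cocyclePsi φf c (Matrix.single g h (1 : R) ⊗ₜ[R] a) =
        ((((c (g⁻¹ * h) h⁻¹)⁻¹ : Aˣ) : A) * φf (g⁻¹ * h) a *
            ((c (g⁻¹ * h) h⁻¹ : Aˣ) : A)) ⊗ₜ[R] Matrix.single g h (1 : R)) ∧
    -- `ψ` is a distributive law between the matrix algebra `M` and `A`
    IsDistLaw R (cocyclePsi φf c) ∧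
    -- `ψ` is bijective
    Function.Bijective (cocyclePsi φf c) := by
  have hrefl := cocycleConj_self h1 fun g => (h2 g).1
  have htrans := cocycleConj_comp_cocycleConj h3 h4
  have hinv : ∀ g h, (cocycleConj φf c g h).comp (cocycleConj φf c h g) = AlgHom.id R A :=
    fun g h => (htrans g h g).trans (hrefl g)
  rw [cocyclePsi_eq_matrixDistLaw]
  exact ⟨fun g h a => by rw [matrixDistLaw_single_tmul, cocycleConj_apply],
    isDistLaw_matrixDistLaw hrefl htrans, matrixDistLaw_bijective hinv⟩
end

section
/- Let k be a field, N a positive integer that is not a multiple of the characteristic of k, and q ∈ k with q^N = 1. Let V denote the group algebra of the integers over k (the Laurent polynomial algebra, with basis {V^m : m∈ℤ}) and U the group algebra of ℤ/N over k (with basis {U^n : n∈ℤ/N}). Then the k-linear map ψ : V⊗U → U⊗V determined by ψ(V^m⊗U^n) = q^{nm}·U^n⊗V^m (well defined since q^N = 1) is a bijective distributive law between the k-algebras V and U; moreover ψ is comultiplicative: Δ_{U⊗V}∘ψ = (ψ⊗ψ)∘Δ_{V⊗U}, where Δ(V^m) = V^m⊗V^m on V and Δ(U^n) = (1/N)·Σ_{j=0}^{N-1}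 U^{j+n}⊗U^{-j} on U, and Δ_{V⊗U}, Δ_{U⊗V} are the tensor product comultiplications. -/
open TensorProduct LinearMap

/-! The map `ψ` is the flip `V^m ⊗ U^n ↦ U^n ⊗ V^m` twisted by the bicharacter
`χ(m, n) = q^{nm}` of `ℤ × ℤ/N`, which is well defined because `q^N = 1`. Multiplicativity of `χ`
in each variable is exactly what the two product axioms of a distributive law demand on basis
vectors, and `χ(0, -) = χ(-, 0) = 1` gives the unit axioms. The values of `χ` are units, so `ψ`
sends a basis to a basis up to invertible scalars and is bijective. Comultiplicativity holds
because `V^m` is group-like and `Δ(U^n)` lies in the span of the `U^a ⊗ U^b` with `a + b = n`,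
where `χ(m, a) χ(m, b) = χ(m, n)`. -/

open AddMonoidAlgebra

section TwistedFlip

variable {k G H : Type*} [CommRing k]

structure IsBicharacter [AddMonoid G] [AddMonoid H] (χ : G → H → k) : Prop where
  map_add_left : ∀ g g' h, χ (g + g') h = χ g h * χ g' h
  map_add_right : ∀ g h h', χ g (h + h') = χ g h * χ g h'
  map_zero_left : ∀ h, χ 0 h = 1
  map_zero_right : ∀ g, χ g 0 = 1

theorem IsBicharacter.isUnit [AddGroup G] [AddMonoid H] {χ : G → H → k} (hχ : IsBicharacter χ)
    (g : G) (h : H) : IsUnit (χ g h) :=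
  IsUnit.of_mul_eq_one (χ (-g) h) <| by
    rw [← hχ.map_add_left, add_neg_cancel, hχ.map_zero_left]

def IsTwistedFlip (χ : G → H → k) (ψ : k[G] ⊗[k] k[H] →ₗ[k] k[H] ⊗[k] k[G]) : Prop :=
  ∀ g h, ψ (single g 1 ⊗ₜ single h 1) = χ g h • (single h 1 ⊗ₜ single g 1)

theorem exists_isTwistedFlip (χ : G → H → k) : ∃ ψ, IsTwistedFlip χ ψ :=
  ⟨((basis G k).tensorProduct (basis H k)).constr k fun p =>
      χ p.1 p.2 • (single p.2 1 ⊗ₜ single p.1 1),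
    fun g h => by
      simpa using ((basis G k).tensorProduct (basis H k)).constr_basis k _ (g, h)⟩

variable (k) in
noncomputable def homogeneousTensors [Add H] (h : H) :
    Submodule k (k[H] ⊗[k] k[H]) :=
  Submodule.span k {x | ∃ a b, a + b = h ∧ single a 1 ⊗ₜ single b 1 = x}

namespace IsTwistedFlip

variable {χ : G → H → k} {ψ : k[G] ⊗[k] k[H] →ₗ[k] k[H] ⊗[k] k[G]}

theorem mul_tmul [AddMonoid G] (hψ : IsTwistedFlip χ ψ)
    (hχ : ∀ g g' h, χ (g + g') h = χ g h * χ g' h) (a a' : k[G]) (b : k[H]) :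
    ψ ((a * a') ⊗ₜ[k] b) =
      lTensor k[H] (mul' k k[G]) ((TensorProduct.assoc k k[H] k[G] k[G])
        (rTensor k[G] ψ
          ((TensorProduct.assoc k k[G] k[H] k[G]).symm (a ⊗ₜ[k] ψ (a' ⊗ₜ[k] b))))) := by
  suffices ψ ∘ₗ rTensor _ (mul' k k[G]) ∘ₗ (TensorProduct.assoc k _ _ _).symm.toLinearMap =
      lTensor _ (mul' k k[G]) ∘ₗ (TensorProduct.assoc k _ _ _).toLinearMap ∘ₗ rTensor _ ψ ∘ₗ
        (TensorProduct.assoc k _ _ _).symm.toLinearMap ∘ₗ lTensor _ ψ by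
    simpa using congr($this (a ⊗ₜ (a' ⊗ₜ b)))
  refine ((basis G k).tensorProduct ((basis G k).tensorProduct (basis H k))).ext
    fun ⟨g, g', h⟩ => ?_
  simp only [Module.Basis.tensorProduct_apply, basis_apply, coe_comp, Function.comp_apply,
    LinearEquiv.coe_coe, assoc_symm_tmul, rTensor_tmul, lTensor_tmul, mul'_apply,
    single_mul_single, one_mul, hψ _ _, tmul_smul, ← smul_tmul', map_smul, assoc_tmul, smul_smul]
  rw [hχ, mul_comm]

theorem tmul_mul [AddMonoid H] (hψ : IsTwistedFlip χ ψ)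
    (hχ : ∀ g h h', χ g (h + h') = χ g h * χ g h') (a : k[G]) (b b' : k[H]) :
    ψ (a ⊗ₜ[k] (b * b')) =
      rTensor k[G] (mul' k k[H]) ((TensorProduct.assoc k k[H] k[H] k[G]).symm
        (lTensor k[H] ψ ((TensorProduct.assoc k k[H] k[G] k[H]) (ψ (a ⊗ₜ[k] b) ⊗ₜ[k] b')))) := by
  suffices ψ ∘ₗ lTensor _ (mul' k k[H]) ∘ₗ (TensorProduct.assoc k _ _ _).toLinearMap =
      rTensor _ (mul' k k[H]) ∘ₗ (TensorProduct.assoc k _ _ _).symm.toLinearMap ∘ₗ lTensor _ ψ ∘ₗ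
        (TensorProduct.assoc k _ _ _).toLinearMap ∘ₗ rTensor _ ψ by
    simpa using congr($this ((a ⊗ₜ b) ⊗ₜ b'))
  refine (((basis G k).tensorProduct (basis H k)).tensorProduct (basis H k)).ext
    fun ⟨⟨g, h⟩, h'⟩ => ?_
  simp only [Module.Basis.tensorProduct_apply, basis_apply, coe_comp, Function.comp_apply,
    LinearEquiv.coe_coe, assoc_symm_tmul, rTensor_tmul, lTensor_tmul, mul'_apply,
    single_mul_single, one_mul, hψ _ _, tmul_smul, ← smul_tmul', map_smul, assoc_tmul, smul_smul]
  rw [hχ, mul_comm]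

theorem one_tmul [AddMonoid G] (hψ : IsTwistedFlip χ ψ) (hχ : ∀ h, χ 0 h = 1) (b : k[H]) :
    ψ ((1 : k[G]) ⊗ₜ[k] b) = b ⊗ₜ[k] (1 : k[G]) := by
  suffices ψ ∘ₗ TensorProduct.mk k k[G] k[H] 1 = (TensorProduct.mk k k[H] k[G]).flip 1 from
    congr($this b)
  refine (basis H k).ext fun h => ?_
  simp [one_def, hψ _ _, hχ]

theorem tmul_one [AddMonoid H] (hψ : IsTwistedFlip χ ψ) (hχ : ∀ g, χ g 0 = 1) (a : k[G]) :
    ψ (a ⊗ₜ[k] (1 : k[H])) = (1 : k[H]) ⊗ₜ[k] a := by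
  suffices ψ ∘ₗ (TensorProduct.mk k k[G] k[H]).flip 1 = TensorProduct.mk k k[H] k[G] 1 from
    congr($this a)
  refine (basis G k).ext fun g => ?_
  simp [one_def, hψ _ _, hχ]

theorem isDistLaw [AddMonoid G] [AddMonoid H] (hψ : IsTwistedFlip χ ψ) (hχ : IsBicharacter χ) :
    IsDistLaw k ψ :=
  ⟨hψ.mul_tmul hχ.map_add_left, hψ.tmul_mul hχ.map_add_right, hψ.one_tmul hχ.map_zero_left,
    hψ.tmul_one hχ.map_zero_right⟩

theorem bijective (hψ : IsTwistedFlip χ ψ) (hχ : ∀ g h, IsUnit (χ g h)) :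
    Function.Bijective ψ := by
  let b := (basis G k).tensorProduct (basis H k)
  let b' := (((basis H k).tensorProduct (basis G k)).reindex (Equiv.prodComm H G)).unitsSMul
    fun p => (hχ p.1 p.2).unit
  suffices ψ = b.equiv b' (Equiv.refl _) from this ▸ LinearEquiv.bijective _
  refine b.ext fun p => ?_
  rw [LinearEquiv.coe_coe, Module.Basis.equiv_apply]
  obtain ⟨g, h⟩ := p
  simp [b, b', hψ _ _, Module.Basis.unitsSMul_apply]

theorem comulD_comp [AddMonoid H] (hψ : IsTwistedFlip χ ψ)
    (hχ : ∀ g h h', χ g (h + h') = χ g h * χ g h')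
    {ΔG : k[G] →ₗ[k] k[G] ⊗[k] k[G]} {ΔH : k[H] →ₗ[k] k[H] ⊗[k] k[H]}
    (hΔG : ∀ g, ΔG (single g 1) = single g 1 ⊗ₜ single g 1)
    (hΔH : ∀ h, ΔH (single h 1) ∈ homogeneousTensors k h) :
    comulD k ΔH ΔG ∘ₗ ψ = TensorProduct.map ψ ψ ∘ₗ comulD k ΔG ΔH := by
  refine ((basis G k).tensorProduct (basis H k)).ext fun ⟨g, h⟩ => ?_
  have key : Set.EqOn
      (χ g h • (tensorTensorTensorComm k k[H] k[H] k[G] k[G]).toLinearMap ∘ₗ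
        (TensorProduct.mk k _ _).flip (single g 1 ⊗ₜ single g 1))
      (TensorProduct.map ψ ψ ∘ₗ (tensorTensorTensorComm k k[G] k[G] k[H] k[H]).toLinearMap ∘ₗ
        TensorProduct.mk k _ _ (single g 1 ⊗ₜ single g 1)) (homogeneousTensors k h) := by
    -- both sides are linear in `ΔH (single h 1)`; on a generator `χ g` splits over `a + b = h`
    refine LinearMap.eqOn_span' ?_
    rintro _ ⟨a, b, rfl, rfl⟩
    simp only [LinearMap.smul_apply, coe_comp, LinearEquiv.coe_coe, Function.comp_apply,
      flip_apply, mk_apply, tensorTensorTensorComm_tmul, map_tmul, hψ _ _, hχ, tmul_smul]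
    rw [← smul_tmul', smul_smul, mul_comm (χ g b)]
  simpa [comulD, hψ _ _, hΔG] using key (hΔH h)

end IsTwistedFlip

end TwistedFlip

theorem AddMonoidAlgebra.exists_linearMap_single {k G M : Type*} [CommRing k] [AddCommGroup M]
    [Module k M] (f : G → M) : ∃ φ : k[G] →ₗ[k] M, ∀ g, φ (single g 1) = f g :=
  ⟨(basis G k).constr k f, (basis G k).constr_basis k f⟩

theorem isBicharacter_pow_val_mul {k : Type*} [CommRing k] {N : ℕ} [NeZero N] {q : k}
    (hq : q ^ N = 1) : IsBicharacter fun (m : ℤ) (n : ZMod N) => q ^ (n * (m : ZMod N)).val where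
  map_add_left m m' n := by
    rw [Int.cast_add, mul_add]
    exact (AddChar.zmodChar N hq).map_add_eq_mul _ _
  map_add_right m n n' := by
    rw [add_mul]
    exact (AddChar.zmodChar N hq).map_add_eq_mul _ _
  map_zero_left n := by simp
  map_zero_right m := by simp

theorem sum_single_add_tmul_single_neg_mem_homogeneousTensors {k H : Type*} [CommRing k]
    [AddCommGroup H] [Fintype H] (h : H) :
    ∑ j : H, single (j + h) (1 : k) ⊗ₜ[k] single (-j) (1 : k) ∈ homogeneousTensors k h :=
  Submodule.sum_mem _ fun j _ => Submodule.subset_span ⟨j + h, -j, by abel, rfl⟩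

theorem quantum_torus_dist_law_general
    {k : Type*} [Field k] (N : ℕ) [NeZero N]
    (q : k) (hq : q ^ N = 1) :
    -- the maps `ψ`, `Δ_V`, `Δ_U` determined by the stated formulas exist ...
    (∃ (ψ : AddMonoidAlgebra k ℤ ⊗[k] AddMonoidAlgebra k (ZMod N) →ₗ[k]
          AddMonoidAlgebra k (ZMod N) ⊗[k] AddMonoidAlgebra k ℤ)
       (ΔV : AddMonoidAlgebra k ℤ →ₗ[k] AddMonoidAlgebra k ℤ ⊗[k] AddMonoidAlgebra k ℤ)
       (ΔU : AddMonoidAlgebra k (ZMod N) →ₗ[k]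
          AddMonoidAlgebra k (ZMod N) ⊗[k] AddMonoidAlgebra k (ZMod N)),
      (∀ (m : ℤ) (n : ZMod N),
        ψ (AddMonoidAlgebra.single m 1 ⊗ₜ[k] AddMonoidAlgebra.single n 1) =
          q ^ (n * (m : ZMod N)).val •
            (AddMonoidAlgebra.single n 1 ⊗ₜ[k] AddMonoidAlgebra.single m 1)) ∧
      (∀ m : ℤ, ΔV (AddMonoidAlgebra.single m 1) =
        AddMonoidAlgebra.single m 1 ⊗ₜ[k] AddMonoidAlgebra.single m 1) ∧
      (∀ n : ZMod N, ΔU (AddMonoidAlgebra.single n 1) =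
        (N : k)⁻¹ • ∑ j : ZMod N,
          (AddMonoidAlgebra.single (j + n) 1 ⊗ₜ[k] AddMonoidAlgebra.single (-j) 1))) ∧
    -- ... and any such maps give a bijective, comultiplicative distributive law
    (∀ (ψ : AddMonoidAlgebra k ℤ ⊗[k] AddMonoidAlgebra k (ZMod N) →ₗ[k]
          AddMonoidAlgebra k (ZMod N) ⊗[k] AddMonoidAlgebra k ℤ)
       (ΔV : AddMonoidAlgebra k ℤ →ₗ[k] AddMonoidAlgebra k ℤ ⊗[k] AddMonoidAlgebra k ℤ)
       (ΔU : AddMonoidAlgebra k (ZMod N) →ₗ[k]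
          AddMonoidAlgebra k (ZMod N) ⊗[k] AddMonoidAlgebra k (ZMod N)),
      (∀ (m : ℤ) (n : ZMod N),
        ψ (AddMonoidAlgebra.single m 1 ⊗ₜ[k] AddMonoidAlgebra.single n 1) =
          q ^ (n * (m : ZMod N)).val •
            (AddMonoidAlgebra.single n 1 ⊗ₜ[k] AddMonoidAlgebra.single m 1)) →
      (∀ m : ℤ, ΔV (AddMonoidAlgebra.single m 1) =
        AddMonoidAlgebra.single m 1 ⊗ₜ[k] AddMonoidAlgebra.single m 1) →
      (∀ n : ZMod N, ΔU (AddMonoidAlgebra.single n 1) =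
        (N : k)⁻¹ • ∑ j : ZMod N,
          (AddMonoidAlgebra.single (j + n) 1 ⊗ₜ[k] AddMonoidAlgebra.single (-j) 1)) →
      IsDistLaw k ψ ∧ Function.Bijective ψ ∧
      comulD k ΔU ΔV ∘ₗ ψ = TensorProduct.map ψ ψ ∘ₗ comulD k ΔV ΔU) := by
  let χ : ℤ → ZMod N → k := fun m n => q ^ (n * (m : ZMod N)).val
  refine ⟨?_, fun ψ ΔV ΔU hψ hΔV hΔU => ?_⟩
  · obtain ⟨ψ, hψ⟩ := exists_isTwistedFlip χ
    obtain ⟨ΔV, hΔV⟩ := exists_linearMap_single (k := k) fun m : ℤ =>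
      single m (1 : k) ⊗ₜ[k] single m (1 : k)
    obtain ⟨ΔU, hΔU⟩ := exists_linearMap_single (k := k) fun n : ZMod N =>
      (N : k)⁻¹ • ∑ j : ZMod N, single (j + n) (1 : k) ⊗ₜ[k] single (-j) (1 : k)
    exact ⟨ψ, ΔV, ΔU, hψ, hΔV, hΔU⟩
  · replace hψ : IsTwistedFlip χ ψ := hψ
    have hχ : IsBicharacter χ := isBicharacter_pow_val_mul hq
    have hΔU_graded (n : ZMod N) : ΔU (single n 1) ∈ homogeneousTensors k n := by
      rw [hΔU]
      exact Submodule.smul_mem _ _ (sum_single_add_tmul_single_neg_mem_homogeneousTensors n)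
    exact ⟨hψ.isDistLaw hχ, hψ.bijective hχ.isUnit,
      hψ.comulD_comp hχ.map_add_right hΔV hΔU_graded⟩

/-- the distributive law of the algebraic quantum torus. -/
theorem quantum_torus_dist_law
    {k : Type*} [Field k] (N : ℕ) [NeZero N] (hchar : (N : k) ≠ 0)
    (q : k) (hq : q ^ N = 1) :
    -- the maps `ψ`, `Δ_V`, `Δ_U` determined by the stated formulas exist ...
    (∃ (ψ : AddMonoidAlgebra k ℤ ⊗[k] AddMonoidAlgebra k (ZMod N) →ₗ[k]
          AddMonoidAlgebra k (ZMod N) ⊗[k] AddMonoidAlgebra k ℤ)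
       (ΔV : AddMonoidAlgebra k ℤ →ₗ[k] AddMonoidAlgebra k ℤ ⊗[k] AddMonoidAlgebra k ℤ)
       (ΔU : AddMonoidAlgebra k (ZMod N) →ₗ[k]
          AddMonoidAlgebra k (ZMod N) ⊗[k] AddMonoidAlgebra k (ZMod N)),
      (∀ (m : ℤ) (n : ZMod N),
        ψ (AddMonoidAlgebra.single m 1 ⊗ₜ[k] AddMonoidAlgebra.single n 1) =
          q ^ (n * (m : ZMod N)).val •
            (AddMonoidAlgebra.single n 1 ⊗ₜ[k] AddMonoidAlgebra.single m 1)) ∧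
      (∀ m : ℤ, ΔV (AddMonoidAlgebra.single m 1) =
        AddMonoidAlgebra.single m 1 ⊗ₜ[k] AddMonoidAlgebra.single m 1) ∧
      (∀ n : ZMod N, ΔU (AddMonoidAlgebra.single n 1) =
        (N : k)⁻¹ • ∑ j : ZMod N,
          (AddMonoidAlgebra.single (j + n) 1 ⊗ₜ[k] AddMonoidAlgebra.single (-j) 1))) ∧
    -- ... and any such maps give a bijective, comultiplicative distributive law
    (∀ (ψ : AddMonoidAlgebra k ℤ ⊗[k] AddMonoidAlgebra k (ZMod N) →ₗ[k]
          AddMonoidAlgebra k (ZMod N) ⊗[k] AddMonoidAlgebra k ℤ)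
       (ΔV : AddMonoidAlgebra k ℤ →ₗ[k] AddMonoidAlgebra k ℤ ⊗[k] AddMonoidAlgebra k ℤ)
       (ΔU : AddMonoidAlgebra k (ZMod N) →ₗ[k]
          AddMonoidAlgebra k (ZMod N) ⊗[k] AddMonoidAlgebra k (ZMod N)),
      (∀ (m : ℤ) (n : ZMod N),
        ψ (AddMonoidAlgebra.single m 1 ⊗ₜ[k] AddMonoidAlgebra.single n 1) =
          q ^ (n * (m : ZMod N)).val •
            (AddMonoidAlgebra.single n 1 ⊗ₜ[k] AddMonoidAlgebra.single m 1)) →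
      (∀ m : ℤ, ΔV (AddMonoidAlgebra.single m 1) =
        AddMonoidAlgebra.single m 1 ⊗ₜ[k] AddMonoidAlgebra.single m 1) →
      (∀ n : ZMod N, ΔU (AddMonoidAlgebra.single n 1) =
        (N : k)⁻¹ • ∑ j : ZMod N,
          (AddMonoidAlgebra.single (j + n) 1 ⊗ₜ[k] AddMonoidAlgebra.single (-j) 1)) →
      IsDistLaw k ψ ∧ Function.Bijective ψ ∧
      comulD k ΔU ΔV ∘ₗ ψ = TensorProduct.map ψ ψ ∘ₗ comulD k ΔV ΔU) :=
  quantum_torus_dist_law_general N q hq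
end
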